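/- arXiv:2601.12958 — 2 statements merged into one kernel-verified Lean document; each statement's English description precedes it below -/
import Mathlib

section
/- Let G be a t.d.l.c. group. Then every compact subgroup K of G is contained in a compact open subgroup of G. -/
/-!
Choose a compact open neighbourhood `W` of `1` and put `X = K * W`, a compact open set containing
`K`. Its stabilizer for left translation is a subgroup containing `K`, contained in `X`, and open
because some neighbourhood `V` of `1` satisfies `V * X ⊆ X`; being an open subgroup it is closed in
the compact set `X`, hence compact.
-/

open Set Pointwise MulAction

section Algebra

variable {G : Type*} [Group G]

lemma stabilizer_subset_of_one_mem {X : Set G} (hX : (1 : G) ∈ X) :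
    (stabilizer G X : Set G) ⊆ X :=
  fun g hg ↦ by simpa [mem_stabilizer_iff.1 hg] using smul_mem_smul_set (a := g) hX

lemma le_stabilizer_coe_mul (K : Subgroup G) (W : Set G) :
    K ≤ stabilizer G ((K : Set G) * W) :=
  fun k hk ↦ mem_stabilizer_iff.2 <| by rw [← smul_mul_assoc, smul_coe_set hk]

end Algebra

section Topology

variable {G : Type*} [Group G] [TopologicalSpace G] [IsTopologicalGroup G]

lemma isOpen_stabilizer_of_isCompact_of_isOpen {X : Set G} (hXc : IsCompact X)
    (hXo : IsOpen X) : IsOpen (stabilizer G X : Set G) := by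
  obtain ⟨V, hV, hVX⟩ := compact_open_separated_mul_left hXc hXo subset_rfl
  have hmaps : ∀ g ∈ V, g • X ⊆ X := fun g hg ↦ (smul_set_subset_mul hg).trans hVX
  refine Subgroup.isOpen_of_mem_nhds _ (g := 1) <|
    Filter.mem_of_superset (Filter.inter_mem hV (inv_mem_nhds_one G hV)) ?_
  rintro g ⟨hg, hg_inv⟩
  exact mem_stabilizer_iff.2 <|
    (hmaps g hg).antisymm (subset_smul_set_iff.2 (hmaps g⁻¹ hg_inv))

lemma isCompact_stabilizer_of_isCompact_of_isOpen {X : Set G} (hXc : IsCompact X)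
    (hXo : IsOpen X) (hX : (1 : G) ∈ X) : IsCompact (stabilizer G X : Set G) :=
  hXc.of_isClosed_subset
    ((stabilizer G X).isClosed_of_isOpen (isOpen_stabilizer_of_isCompact_of_isOpen hXc hXo))
    (stabilizer_subset_of_one_mem hX)

end Topology

lemma exists_isCompact_isClopen_mem {X : Type*} [TopologicalSpace X] [LocallyCompactSpace X]
    [T2Space X] [TotallyDisconnectedSpace X] (x : X) :
    ∃ W : Set X, IsCompact W ∧ IsClopen W ∧ x ∈ W := by
  obtain ⟨C, hCc, hC⟩ := exists_compact_mem_nhds x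
  obtain ⟨W, hW, hxW, hWC⟩ := loc_compact_Haus_tot_disc_of_zero_dim.mem_nhds_iff.1 hC
  exact ⟨W, hCc.of_isClosed_subset hW.isClosed hWC, hW, hxW⟩

theorem compact_subgroup_le_compact_open_subgroup_general
    {G : Type*} [Group G] [TopologicalSpace G] [IsTopologicalGroup G]
    [TotallyDisconnectedSpace G] [LocallyCompactSpace G]
    (K : Subgroup G) (hK : IsCompact (K : Set G)) :
    ∃ U : Subgroup G, IsCompact (U : Set G) ∧ IsOpen (U : Set G) ∧ K ≤ U := by
  obtain ⟨W, hWc, hWo, h1W⟩ := exists_isCompact_isClopen_mem (1 : G)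
  have hXc : IsCompact ((K : Set G) * W) := hK.mul hWc
  have hXo : IsOpen ((K : Set G) * W) := hWo.isOpen.mul_left
  have h1X : (1 : G) ∈ (K : Set G) * W := ⟨1, K.one_mem, 1, h1W, one_mul 1⟩
  exact ⟨stabilizer G ((K : Set G) * W), isCompact_stabilizer_of_isCompact_of_isOpen hXc hXo h1X,
    isOpen_stabilizer_of_isCompact_of_isOpen hXc hXo, le_stabilizer_coe_mul K W⟩

/-- Let `G` be a t.d.l.c. group (Hausdorff, totally disconnected, locally compact
topological group). Then every compact subgroup `K` of `G` is contained in a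
compact open subgroup of `G`. -/
theorem compact_subgroup_le_compact_open_subgroup
    {G : Type*} [Group G] [TopologicalSpace G] [IsTopologicalGroup G]
    [T2Space G] [TotallyDisconnectedSpace G] [LocallyCompactSpace G]
    (K : Subgroup G) (hK : IsCompact (K : Set G)) :
    ∃ U : Subgroup G, IsCompact (U : Set G) ∧ IsOpen (U : Set G) ∧ K ≤ U :=
  compact_subgroup_le_compact_open_subgroup_general K hK
end

section
/- Let G be a t.d.l.c. group and K a compact subgroup of G. Then the quotient group N_G(K)/K of the normalizer of K by K, equipped with the quotient topology coming from the subspace topology on N_G(K), is again a t.d.l.c. group, i.e., it is Hausdorff, locally compact and totally disconnected. -/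
/-!
The normalizer of the closed subgroup `K` is closed, hence itself a t.d.l.c. group, and by
van Dantzig's theorem its open subgroups form a neighbourhood basis of the identity. This
property passes to the quotient by the closed normal subgroup `K`, because the quotient map
is open; a Hausdorff group with a basis of open subgroups is totally disconnected, and local
compactness and the Hausdorff property of the quotient are standard.
-/

open Set Pointwise Topology

theorem exists_isCompact_isClopen_subset_of_mem_nhds {X : Type*} [TopologicalSpace X]
    [LocallyCompactSpace X] [T2Space X] [TotallyDisconnectedSpace X] {x : X} {U : Set X}
    (hU : U ∈ 𝓝 x) : ∃ C, IsCompact C ∧ IsClopen C ∧ x ∈ C ∧ C ⊆ U := by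
  obtain ⟨s, hs, hsU, hs_compact⟩ := local_compact_nhds hU
  obtain ⟨C, hC_clopen, hxC, hCs⟩ := loc_compact_Haus_tot_disc_of_zero_dim.mem_nhds_iff.1 hs
  exact ⟨C, hs_compact.of_isClosed_subset hC_clopen.isClosed hCs, hC_clopen, hxC, hCs.trans hsU⟩

theorem Subgroup.isClosed_normalizer {G : Type*} [Group G] [TopologicalSpace G]
    [IsTopologicalGroup G] {s : Set G} (hs : IsClosed s) : IsClosed (normalizer s : Set G) := by
  have h : (normalizer s : Set G) =
      (⋂ h ∈ s, (fun g => g * h * g⁻¹) ⁻¹' s) ∩ ⋂ h ∈ s, (fun g => g⁻¹ * h * g) ⁻¹' s := by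
    ext g
    simp only [SetLike.mem_coe, mem_set_normalizer_iff, mem_inter_iff, mem_iInter, mem_preimage]
    refine ⟨fun hg => ⟨fun h => (hg h).1, fun h hh => (hg _).2 (by simpa [mul_assoc] using hh)⟩,
      fun ⟨hconj, hconj_inv⟩ h => ⟨hconj h, fun hh => by simpa [mul_assoc] using hconj_inv _ hh⟩⟩
  rw [h]
  exact (isClosed_biInter fun _ _ => hs.preimage (by fun_prop)).inter
    (isClosed_biInter fun _ _ => hs.preimage (by fun_prop))

theorem NonarchimedeanGroup.of_locallyCompactSpace_of_totallyDisconnectedSpace {G : Type*}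
    [Group G] [TopologicalSpace G] [IsTopologicalGroup G] [T2Space G] [LocallyCompactSpace G]
    [TotallyDisconnectedSpace G] : NonarchimedeanGroup G where
  is_nonarchimedean U hU := by
    obtain ⟨C, hC_compact, hC_clopen, h1C, hCU⟩ := exists_isCompact_isClopen_subset_of_mem_nhds hU
    obtain ⟨W, hW, hCW⟩ := compact_open_separated_mul_right hC_compact hC_clopen.isOpen subset_rfl
    have hW_symm : W ∩ W⁻¹ ∈ 𝓝 (1 : G) := Filter.inter_mem hW (inv_mem_nhds_one G hW)
    -- `C` is stable under right multiplication by `W ∩ W⁻¹` and its inverses, so it contains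
    -- the subgroup they generate.
    have hVC : (Subgroup.closure (W ∩ W⁻¹) : Set G) ⊆ C := fun x hx => by
      induction hx using Subgroup.closure_induction_right with
      | one => exact h1C
      | mul_right x _ y hy hx => exact hCW (mul_mem_mul hx hy.1)
      | mul_inv_cancel x _ y hy hx => exact hCW (mul_mem_mul hx hy.2)
    exact ⟨⟨_, Subgroup.isOpen_of_mem_nhds _ (Filter.mem_of_superset hW_symm
      Subgroup.subset_closure)⟩, hVC.trans hCU⟩

instance QuotientGroup.instNonarchimedeanGroup {G : Type*} [Group G] [TopologicalSpace G]
    [NonarchimedeanGroup G] (N : Subgroup G) [N.Normal] : NonarchimedeanGroup (G ⧸ N) where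
  is_nonarchimedean U hU := by
    obtain ⟨V, hV⟩ := NonarchimedeanGroup.is_nonarchimedean _
      (continuous_quot_mk.tendsto (1 : G) hU)
    exact ⟨⟨V.toSubgroup.map (QuotientGroup.mk' N), QuotientGroup.isOpenMap_coe _ V.isOpen⟩,
      image_subset_iff.2 hV⟩

/-- Let `G` be a t.d.l.c. group and `K` a compact subgroup of `G`. Then the
quotient group `N_G(K)/K`, equipped with the quotient topology coming from the
subspace topology on `N_G(K)`, is again a t.d.l.c. group: it is Hausdorff, locally
compact and totally disconnected. -/
theorem weyl_group_tdlc
    {G : Type*} [Group G] [TopologicalSpace G] [IsTopologicalGroup G]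
    [T2Space G] [TotallyDisconnectedSpace G] [LocallyCompactSpace G]
    (K : Subgroup G) (hK : IsCompact (K : Set G)) :
    T2Space (Subgroup.normalizer (K : Set G) ⧸ K.subgroupOf (Subgroup.normalizer (K : Set G))) ∧
    LocallyCompactSpace (Subgroup.normalizer (K : Set G) ⧸ K.subgroupOf (Subgroup.normalizer (K : Set G))) ∧
    TotallyDisconnectedSpace (Subgroup.normalizer (K : Set G) ⧸ K.subgroupOf (Subgroup.normalizer (K : Set G))) := by
  have : LocallyCompactSpace (Subgroup.normalizer (K : Set G)) :=
    (Subgroup.isClosed_normalizer hK.isClosed).locallyCompactSpace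
  have : IsClosed (K.subgroupOf (Subgroup.normalizer (K : Set G)) :
      Set (Subgroup.normalizer (K : Set G))) :=
    hK.isClosed.preimage continuous_subtype_val
  have : NonarchimedeanGroup (Subgroup.normalizer (K : Set G)) :=
    .of_locallyCompactSpace_of_totallyDisconnectedSpace
  exact ⟨inferInstance, inferInstance, inferInstance⟩
end
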